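/- arXiv:1112.5557 — 3 statements merged into one kernel-verified Lean document; each statement's English description precedes it below -/
import Mathlib

section
/- Let s > 0, E > 0, B = s·log(1 + E/s), and θ ≥ φ > 0. If T* > 0 is the unique solution of φ·B = T*·log(1 + θ·E/T*), then T* ≤ φ·s. -/
open Real Set

/-! `T ↦ T log (1 + c / T)` is strictly increasing on `T > 0`, by strict concavity of `log`.
Since `θ / φ ≥ 1`, its value at `T = φ s` is at least `φ s log (1 + E / s) = φ B`, which is its
value at `T*`; hence `T* ≤ φ s`. -/

lemma strictMonoOn_mul_log_one_add_div {c : ℝ} (hc : 0 < c) :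
    StrictMonoOn (fun T => T * log (1 + c / T)) (Ioi 0) := by
  intro a (ha : 0 < a) b (hb : 0 < b) hab
  have hmem : 1 + c / a ∈ Ioi (0 : ℝ) := by simp only [mem_Ioi]; positivity
  have hne : 1 + c / a ≠ 1 := (lt_add_of_pos_right 1 (by positivity)).ne'
  have hw : 0 < 1 - a / b := by rw [sub_pos, div_lt_one hb]; exact hab
  -- `1 + c / b` is the convex combination of `1 + c / a` and `1` with weights `a / b`, `1 - a / b`.
  have hcomb : (a / b) • (1 + c / a) + (1 - a / b) • (1 : ℝ) = 1 + c / b := by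
    simp only [smul_eq_mul]; field_simp; ring
  have hconc := strictConcaveOn_log_Ioi.2 hmem (mem_Ioi.2 one_pos) hne (div_pos ha hb) hw (by ring)
  rw [hcomb, log_one, smul_eq_mul, smul_eq_mul, mul_zero, add_zero] at hconc
  show a * log (1 + c / a) < b * log (1 + c / b)
  calc a * log (1 + c / a) = b * (a / b * log (1 + c / a)) := by field_simp
    _ < b * log (1 + c / b) := by gcongr

theorem lazy_residual_time (s E B θ φ Tstar : ℝ) (hs : 0 < s) (hE : 0 < E)
    (hB : B = s * Real.log (1 + E / s)) (hφ : 0 < φ) (hθφ : φ ≤ θ)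
    (hT : 0 < Tstar) (hTeq : φ * B = Tstar * Real.log (1 + θ * E / Tstar)) :
    Tstar ≤ φ * s := by
  have hθE : 0 < θ * E := by have := hφ.trans_le hθφ; positivity
  have hφs : 0 < φ * s := by positivity
  have hratio : E / s ≤ θ * E / (φ * s) := by
    rw [div_le_div_iff₀ hs hφs]
    calc E * (φ * s) = φ * E * s := by ring
      _ ≤ θ * E * s := by gcongr
  have hcompare : Tstar * log (1 + θ * E / Tstar) ≤ φ * s * log (1 + θ * E / (φ * s)) := by
    rw [← hTeq, hB, ← mul_assoc]
    gcongr
  exact (strictMonoOn_mul_log_one_add_div hθE).le_iff_le hT hφs |>.1 hcompare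
end

section
/- Let T₀ > s₁ > 0 and s_Last > 0, and set φ₁ = ((T₀ − s₁)/T₀) / (s_Last/(s₁ + s_Last)). Then s₁ + φ₁ · s_Last ≤ 2·s₁ + s_Last, and hence s₁ + φ₁·s_Last ≤ 2·(s₁ + s_Last). -/
/-! At the first energy arrival the online algorithm has the fraction `(T₀ - s₁) / T₀ ≤ 1` of its
bits left, while the offline one has `sLast / (s₁ + sLast)`. Hence `φ₁ · sLast` equals
`(T₀ - s₁) / T₀ · (s₁ + sLast) ≤ s₁ + sLast`, i.e. the online algorithm needs at most one extra
`s₁` of time. -/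

theorem div_div_mul_le_of_le_one {α : Type*} [Field α] [LinearOrder α] [IsStrictOrderedRing α]
    {a b c : α} (ha : a ≤ 1) (hb : b ≠ 0) (hc : 0 ≤ c) : a / (b / c) * b ≤ c := by
  rw [div_div_eq_mul_div, div_mul_cancel₀ _ hb]
  exact mul_le_of_le_one_left hc ha

theorem two_competitive_simple (T₀ s₁ sLast : ℝ) (hs₁ : 0 < s₁) (hT₀ : s₁ < T₀)
    (hsLast : 0 < sLast) :
    s₁ + (((T₀ - s₁) / T₀) / (sLast / (s₁ + sLast))) * sLast ≤ 2 * s₁ + sLast ∧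
    s₁ + (((T₀ - s₁) / T₀) / (sLast / (s₁ + sLast))) * sLast ≤ 2 * (s₁ + sLast) := by
  have hratio : (T₀ - s₁) / T₀ ≤ 1 := div_le_one_of_le₀ (by linarith) (by linarith)
  have hextra : (T₀ - s₁) / T₀ / (sLast / (s₁ + sLast)) * sLast ≤ s₁ + sLast :=
    div_div_mul_le_of_le_one hratio hsLast.ne' (by linarith)
  constructor <;> linarith
end

section
/- Let B > 0, E₀ > 0, E₁ > 0, 0 < t₁ < T_O, and T₀ > t₁ satisfy B = t₁·log(1 + E₀/t₁) + (T_O − t₁)·log(1 + E₁/(T_O − t₁)). Then B·((T₀ − t₁)/T₀) ≤ T_O · log(1 + (E₁ + E₀·(T₀ − t₁)/T₀)/T_O). -/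
/-!
The map `(a, x) ↦ a * log (1 + x / a)` is the perspective of the concave function `log (1 + x)`,
so it is positively homogeneous and superadditive, hence nondecreasing in `a`.
Scaling the offline schedule by `λ = (T₀ - t₁) / T₀ ≤ 1`, the first phase becomes
`(λ t₁) * log (1 + λ E₀ / (λ t₁))` and the second shrinks; superadditivity merges the two phases
into one of length `λ t₁ + (T_O - t₁) ≤ T_O`, and monotonicity stretches it to length `T_O`.
-/

open Real

theorem mul_log_one_add_div_add_le {a b x y : ℝ} (ha : 0 < a) (hb : 0 < b)
    (hax : 0 < a + x) (hby : 0 < b + y) :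
    a * log (1 + x / a) + b * log (1 + y / b) ≤ (a + b) * log (1 + (x + y) / (a + b)) := by
  have hab : 0 < a + b := by linarith
  have hx : (1 + x / a) ∈ Set.Ioi (0 : ℝ) := by
    rw [Set.mem_Ioi, one_add_div ha.ne']; positivity
  have hy : (1 + y / b) ∈ Set.Ioi (0 : ℝ) := by
    rw [Set.mem_Ioi, one_add_div hb.ne']; positivity
  have hconc := strictConcaveOn_log_Ioi.concaveOn.2 hx hy (div_pos ha hab).le (div_pos hb hab).le
    (by field_simp)
  have hmix : a / (a + b) * (1 + x / a) + b / (a + b) * (1 + y / b) = 1 + (x + y) / (a + b) := by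
    field_simp; ring
  simp only [smul_eq_mul, hmix] at hconc
  calc a * log (1 + x / a) + b * log (1 + y / b)
      = (a + b) * (a / (a + b) * log (1 + x / a) + b / (a + b) * log (1 + y / b)) := by
        field_simp
    _ ≤ (a + b) * log (1 + (x + y) / (a + b)) := mul_le_mul_of_nonneg_left hconc hab.le

theorem mul_log_one_add_div_mono {a c x : ℝ} (ha : 0 < a) (hac : a ≤ c) (hax : 0 < a + x) :
    a * log (1 + x / a) ≤ c * log (1 + x / c) := by
  rcases hac.eq_or_lt with rfl | hlt
  · exact le_rfl
  simpa using mul_log_one_add_div_add_le (y := 0) ha (sub_pos.2 hlt) hax (by linarith)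

theorem mul_log_one_add_div_smul {a x : ℝ} (l : ℝ) (hl : l ≠ 0) :
    l * (a * log (1 + x / a)) = (l * a) * log (1 + (l * x) / (l * a)) := by
  rw [mul_div_mul_left _ _ hl, mul_assoc]

theorem lazy_case2_bound_general (B E₀ E₁ t₁ TO T₀ : ℝ) (hE₀ : 0 < E₀)
    (hE₁ : 0 < E₁) (ht₁ : 0 < t₁) (htT : t₁ < TO) (hT₀ : t₁ < T₀)
    (heq : B = t₁ * Real.log (1 + E₀ / t₁) + (TO - t₁) * Real.log (1 + E₁ / (TO - t₁))) :
    B * ((T₀ - t₁) / T₀) ≤ TO * Real.log (1 + (E₁ + E₀ * ((T₀ - t₁) / T₀)) / TO) := by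
  set l := (T₀ - t₁) / T₀
  have hl_pos : 0 < l := div_pos (by linarith) (by linarith)
  have hl_le_one : l ≤ 1 := (div_le_one (by linarith)).2 (by linarith)
  have hsecond : l * ((TO - t₁) * log (1 + E₁ / (TO - t₁)))
      ≤ (TO - t₁) * log (1 + E₁ / (TO - t₁)) :=
    mul_le_of_le_one_left
      (mul_nonneg (by linarith) (log_nonneg (le_add_of_nonneg_right (by positivity)))) hl_le_one
  calc B * l
      = l * (t₁ * log (1 + E₀ / t₁)) + l * ((TO - t₁) * log (1 + E₁ / (TO - t₁))) := by
        rw [heq]; ring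
    _ ≤ (l * t₁) * log (1 + (l * E₀) / (l * t₁)) + (TO - t₁) * log (1 + E₁ / (TO - t₁)) := by
        rw [mul_log_one_add_div_smul l hl_pos.ne']; exact add_le_add_right hsecond _
    _ ≤ (l * t₁ + (TO - t₁)) * log (1 + (l * E₀ + E₁) / (l * t₁ + (TO - t₁))) :=
        mul_log_one_add_div_add_le (by positivity) (by linarith) (by positivity) (by linarith)
    _ ≤ TO * log (1 + (l * E₀ + E₁) / TO) :=
        mul_log_one_add_div_mono (by positivity) (by nlinarith) (by positivity)
    _ = TO * Real.log (1 + (E₁ + E₀ * l) / TO) := by ring_nf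

theorem lazy_case2_bound (B E₀ E₁ t₁ TO T₀ : ℝ) (hB : 0 < B) (hE₀ : 0 < E₀)
    (hE₁ : 0 < E₁) (ht₁ : 0 < t₁) (htT : t₁ < TO) (hT₀ : t₁ < T₀)
    (heq : B = t₁ * Real.log (1 + E₀ / t₁) + (TO - t₁) * Real.log (1 + E₁ / (TO - t₁))) :
    B * ((T₀ - t₁) / T₀) ≤ TO * Real.log (1 + (E₁ + E₀ * ((T₀ - t₁) / T₀)) / TO) :=
  lazy_case2_bound_general B E₀ E₁ t₁ TO T₀ hE₀ hE₁ ht₁ htT hT₀ heq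
end
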